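/- arXiv:solv-int/9712012 — 2 statements merged into one kernel-verified Lean document; each statement's English description precedes it below -/
import Mathlib

section
/- One has ∂̄₁²(Φ₁τ) − ∂̄₂(Φ₁τ) = 2Φ₃τ. Equivalently, writing τ̄ = Φ₁τ and p₂ for the second Schur polynomial (so p₂(−[∂̄]) = (∂̄₁² − ∂̄₂)/2), this is the s = 2 case of the relation p_s(−[∂̄])τ̄ = (Φ_{s+1}/Φ₁)·τ̄ from the paper's Proposition 4 identifying τ̄ = Φ₁τ as the tau-function of the ghost KP hierarchy. -/
/-- Partial derivative with respect to the first variable `x`. -/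
noncomputable def d1 (f : ℝ → ℝ → ℝ → ℝ) : ℝ → ℝ → ℝ → ℝ :=
  fun x t₁ t₂ => deriv (fun y => f y t₁ t₂) x

/-- Partial derivative with respect to the second variable `t̄₁`. -/
noncomputable def d2 (f : ℝ → ℝ → ℝ → ℝ) : ℝ → ℝ → ℝ → ℝ :=
  fun x t₁ t₂ => deriv (fun s => f x s t₂) t₁

/-- Partial derivative with respect to the third variable `t̄₂`. -/
noncomputable def d3 (f : ℝ → ℝ → ℝ → ℝ) : ℝ → ℝ → ℝ → ℝ :=
  fun x t₁ t₂ => deriv (fun s => f x t₁ s) t₂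

/-- Smoothness of a function of three real variables. -/
def Smooth3 (f : ℝ → ℝ → ℝ → ℝ) : Prop :=
  ContDiff ℝ (⊤ : ℕ∞) (fun p : ℝ × ℝ × ℝ => f p.1 p.2.1 p.2.2)


lemma Smooth3.diff2 {f : ℝ → ℝ → ℝ → ℝ} (hf : Smooth3 f) (x t₂ : ℝ) :
    Differentiable ℝ (fun s => f x s t₂) := by
  have : ContDiff ℝ (⊤ : ℕ∞) (fun s : ℝ => f x s t₂) := by
    have h : (fun s : ℝ => f x s t₂) =
        (fun p : ℝ × ℝ × ℝ => f p.1 p.2.1 p.2.2) ∘ (fun s => (x, s, t₂)) := rfl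
    rw [h]
    exact hf.comp (ContDiff.prodMk contDiff_const (ContDiff.prodMk contDiff_id contDiff_const))
  exact this.differentiable (by simp)

lemma Smooth3.diff3 {f : ℝ → ℝ → ℝ → ℝ} (hf : Smooth3 f) (x t₁ : ℝ) :
    Differentiable ℝ (fun s => f x t₁ s) := by
  have : ContDiff ℝ (⊤ : ℕ∞) (fun s : ℝ => f x t₁ s) := by
    have h : (fun s : ℝ => f x t₁ s) =
        (fun p : ℝ × ℝ × ℝ => f p.1 p.2.1 p.2.2) ∘ (fun s => (x, t₁, s)) := rfl
    rw [h]
    exact hf.comp (ContDiff.prodMk contDiff_const (ContDiff.prodMk contDiff_const contDiff_id))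
  exact this.differentiable (by simp)

lemma d2_mul {f g : ℝ → ℝ → ℝ → ℝ} (hf : Smooth3 f) (hg : Smooth3 g) (x t₁ t₂ : ℝ) :
    d2 (fun x t₁ t₂ => f x t₁ t₂ * g x t₁ t₂) x t₁ t₂ =
      d2 f x t₁ t₂ * g x t₁ t₂ + f x t₁ t₂ * d2 g x t₁ t₂ := by
  unfold d2
  exact deriv_mul ((hf.diff2 x t₂) t₁) ((hg.diff2 x t₂) t₁)

lemma d3_mul {f g : ℝ → ℝ → ℝ → ℝ} (hf : Smooth3 f) (hg : Smooth3 g) (x t₁ t₂ : ℝ) :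
    d3 (fun x t₁ t₂ => f x t₁ t₂ * g x t₁ t₂) x t₁ t₂ =
      d3 f x t₁ t₂ * g x t₁ t₂ + f x t₁ t₂ * d3 g x t₁ t₂ := by
  unfold d3
  exact deriv_mul ((hf.diff3 x t₁) t₂) ((hg.diff3 x t₁) t₂)

/-- `∂̄₁²(Φ₁τ) − ∂̄₂(Φ₁τ) = 2Φ₃τ`, the `s = 2` case of
`p_s(−[∂̄])τ̄ = (Φ_{s+1}/Φ₁)·τ̄` for the ghost tau-function `τ̄ = Φ₁τ`. -/
theorem ghost_tau_Schur_s2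
    (Φ₁ Φ₂ Φ₃ Ψ₁ Ψ₂ s₁₁ s₁₂ s₂₁ τ : ℝ → ℝ → ℝ → ℝ)
    (hΦ₁ : Smooth3 Φ₁) (hΦ₂ : Smooth3 Φ₂) (hΦ₃ : Smooth3 Φ₃)
    (hΨ₁ : Smooth3 Ψ₁) (hΨ₂ : Smooth3 Ψ₂)
    (hs₁₁ : Smooth3 s₁₁) (hs₁₂ : Smooth3 s₁₂) (hs₂₁ : Smooth3 s₂₁)
    (hτ : Smooth3 τ)
    -- squared-eigenfunction potentials
    (hpot₁₁ : ∀ x t₁ t₂, d1 s₁₁ x t₁ t₂ = Ψ₁ x t₁ t₂ * Φ₁ x t₁ t₂)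
    (hpot₁₂ : ∀ x t₁ t₂, d1 s₁₂ x t₁ t₂ = Ψ₁ x t₁ t₂ * Φ₂ x t₁ t₂)
    (hpot₂₁ : ∀ x t₁ t₂, d1 s₂₁ x t₁ t₂ = Ψ₂ x t₁ t₂ * Φ₁ x t₁ t₂)
    -- ghost-symmetry flow equations
    (hflow₁Φ₁ : ∀ x t₁ t₂, d2 Φ₁ x t₁ t₂ = Φ₁ x t₁ t₂ * s₁₁ x t₁ t₂ - Φ₂ x t₁ t₂)
    (hflow₁Φ₂ : ∀ x t₁ t₂, d2 Φ₂ x t₁ t₂ = Φ₁ x t₁ t₂ * s₁₂ x t₁ t₂ - Φ₃ x t₁ t₂)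
    (hflow₂Φ₁ : ∀ x t₁ t₂, d3 Φ₁ x t₁ t₂ =
      Φ₂ x t₁ t₂ * s₁₁ x t₁ t₂ + Φ₁ x t₁ t₂ * s₂₁ x t₁ t₂ - Φ₃ x t₁ t₂)
    -- tau-function flow equations
    (hflow₁τ : ∀ x t₁ t₂, d2 τ x t₁ t₂ = -(s₁₁ x t₁ t₂) * τ x t₁ t₂)
    (hflow₂τ : ∀ x t₁ t₂, d3 τ x t₁ t₂ = -(s₁₂ x t₁ t₂ + s₂₁ x t₁ t₂) * τ x t₁ t₂) :
    ∀ x t₁ t₂,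
      d2 (d2 (fun x t₁ t₂ => Φ₁ x t₁ t₂ * τ x t₁ t₂)) x t₁ t₂
        - d3 (fun x t₁ t₂ => Φ₁ x t₁ t₂ * τ x t₁ t₂) x t₁ t₂
        = 2 * Φ₃ x t₁ t₂ * τ x t₁ t₂ := by
  intro x t₁ t₂
  have h1 : (fun x t₁ t₂ => d2 (fun x t₁ t₂ => Φ₁ x t₁ t₂ * τ x t₁ t₂) x t₁ t₂)
      = fun x t₁ t₂ => -Φ₂ x t₁ t₂ * τ x t₁ t₂ := by
    funext a b c
    rw [d2_mul hΦ₁ hτ, hflow₁Φ₁, hflow₁τ]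
    ring
  rw [show d2 (d2 (fun x t₁ t₂ => Φ₁ x t₁ t₂ * τ x t₁ t₂)) = d2 (fun x t₁ t₂ => -Φ₂ x t₁ t₂ * τ x t₁ t₂) from by rw [← h1]]
  have hΦ₂' : Smooth3 (fun x t₁ t₂ => -Φ₂ x t₁ t₂) := hΦ₂.neg
  have h2 : d2 (fun x t₁ t₂ => -Φ₂ x t₁ t₂) x t₁ t₂ = -(d2 Φ₂ x t₁ t₂) := by
    unfold d2; exact deriv.neg
  rw [d2_mul hΦ₂' hτ, d3_mul hΦ₁ hτ, h2, hflow₁Φ₂, hflow₁τ, hflow₂Φ₁, hflow₂τ]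
  ring
end

section
/- For every 1 ≤ m ≤ k, the Wronskians W_m = W[Φ₁,…,Φ_m] satisfy the 2D-Toda-lattice-like equation W_m·∂∂̄W_m − (∂W_m)(∂̄W_m) = Φ₁Ψ₁·W_m² − W_{m+1}·W_{m−1} (equivalently, ∂∂̄ ln W_m = Φ₁Ψ₁ − W_{m+1}W_{m−1}/W_m² wherever W_m ≠ 0). This is the first equation of the paper's display (2DTL-like). -/
/-- Partial derivative with respect to the first variable `x`. -/
noncomputable def pdx (f : ℝ → ℝ → ℝ) : ℝ → ℝ → ℝ :=
  fun x t => deriv (fun y => f y t) x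

/-- Partial derivative with respect to the second variable `t̄`. -/
noncomputable def pdt (f : ℝ → ℝ → ℝ) : ℝ → ℝ → ℝ :=
  fun x t => deriv (fun s => f x s) t

/-- Smoothness of a function of two real variables. -/
def Smooth2 (f : ℝ → ℝ → ℝ) : Prop :=
  ContDiff ℝ (⊤ : ℕ∞) (Function.uncurry f)

/-- Wronskian in `x` of an `m`-tuple of functions of `(x, t̄)`:
`det(∂_x^{i−1} f_j)`, with the `0×0` determinant equal to `1`. -/
noncomputable def wronskian (m : ℕ) (g : Fin m → ℝ → ℝ → ℝ) : ℝ → ℝ → ℝ :=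
  fun x t =>
    (Matrix.of fun i j : Fin m => iteratedDeriv (i : ℕ) (fun y => g j y t) x).det

/-- `W_m = W[Φ₁,…,Φ_m]` (so `W₀ = 1`). -/
noncomputable def Wr (Φ : ℕ → ℝ → ℝ → ℝ) (m : ℕ) : ℝ → ℝ → ℝ :=
  wronskian m (fun j => Φ ((j : ℕ) + 1))

/-- `W[Φ₁,…,Φ_{m−1},Φ_{m+1}]`: the Wronskian with the last entry shifted by one. -/
noncomputable def WrShift (Φ : ℕ → ℝ → ℝ → ℝ) (m : ℕ) : ℝ → ℝ → ℝ :=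
  wronskian m (fun j => Φ (if (j : ℕ) + 1 = m then m + 1 else (j : ℕ) + 1))

open Function Matrix

noncomputable def PD (n : ℕ) (f : ℝ → ℝ → ℝ) : ℝ → ℝ → ℝ := pdx^[n] f

lemma PD_zero (f : ℝ → ℝ → ℝ) : PD 0 f = f := rfl

lemma PD_succ' (n : ℕ) (f : ℝ → ℝ → ℝ) : PD (n+1) f = pdx (PD n f) :=
  Function.iterate_succ_apply' pdx n f

lemma iteratedDeriv_slice (f : ℝ → ℝ → ℝ) (t : ℝ) :
    ∀ n, iteratedDeriv n (fun y => f y t) = fun x => PD n f x t := by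
  intro n
  induction n with
  | zero => simp [PD_zero]
  | succ n ih =>
      rw [iteratedDeriv_succ, ih, PD_succ']
      rfl

lemma Smooth2.slice_x {f : ℝ → ℝ → ℝ} (hf : Smooth2 f) (t : ℝ) :
    ContDiff ℝ (⊤ : ℕ∞) (fun y => f y t) :=
  hf.comp (contDiff_id.prodMk contDiff_const)

lemma Smooth2.slice_t {f : ℝ → ℝ → ℝ} (hf : Smooth2 f) (x : ℝ) :
    ContDiff ℝ (⊤ : ℕ∞) (fun s => f x s) :=
  hf.comp (contDiff_const.prodMk contDiff_id)

lemma Smooth2.hasDerivAt_x {f : ℝ → ℝ → ℝ} (hf : Smooth2 f) (x t : ℝ) :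
    HasDerivAt (fun y => f y t) (pdx f x t) x :=
  (((hf.slice_x t).differentiable (by simp)) x).hasDerivAt

lemma Smooth2.hasDerivAt_t {f : ℝ → ℝ → ℝ} (hf : Smooth2 f) (x t : ℝ) :
    HasDerivAt (fun s => f x s) (pdt f x t) t :=
  (((hf.slice_t x).differentiable (by simp)) t).hasDerivAt

lemma hasDerivAt_line_x (x t : ℝ) : HasDerivAt (fun y : ℝ => (y, t)) ((1 : ℝ), (0 : ℝ)) x :=
  (hasDerivAt_id x).prodMk (hasDerivAt_const x t)

lemma hasDerivAt_line_t (x t : ℝ) : HasDerivAt (fun s : ℝ => (x, s)) ((0 : ℝ), (1 : ℝ)) t :=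
  (hasDerivAt_const t x).prodMk (hasDerivAt_id t)

lemma pdx_eq_fderiv {f : ℝ → ℝ → ℝ} (hf : Smooth2 f) (x t : ℝ) :
    pdx f x t = fderiv ℝ (uncurry f) (x, t) (1, 0) := by
  have hF : HasFDerivAt (uncurry f) (fderiv ℝ (uncurry f) (x, t)) (x, t) :=
    ((hf.differentiable (by simp)) (x, t)).hasFDerivAt
  have : HasDerivAt (fun y => f y t) (fderiv ℝ (uncurry f) (x, t) (1, 0)) x :=
    (hF.comp_hasDerivAt x (hasDerivAt_line_x x t) : HasDerivAt (uncurry f ∘ fun y => (y, t)) _ x)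
  exact this.deriv.symm ▸ rfl

lemma pdt_eq_fderiv {f : ℝ → ℝ → ℝ} (hf : Smooth2 f) (x t : ℝ) :
    pdt f x t = fderiv ℝ (uncurry f) (x, t) (0, 1) := by
  have hF : HasFDerivAt (uncurry f) (fderiv ℝ (uncurry f) (x, t)) (x, t) :=
    ((hf.differentiable (by simp)) (x, t)).hasFDerivAt
  have : HasDerivAt (fun s => f x s) (fderiv ℝ (uncurry f) (x, t) (0, 1)) t :=
    hF.comp_hasDerivAt t (hasDerivAt_line_t x t)
  exact this.deriv.symm ▸ rfl

lemma Smooth2.smooth_pdx {f : ℝ → ℝ → ℝ} (hf : Smooth2 f) : Smooth2 (pdx f) := by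
  have h1 : ContDiff ℝ (⊤ : ℕ∞) (fun p : ℝ × ℝ => fderiv ℝ (uncurry f) p (1, 0)) :=
    (hf.fderiv_right (by simp)).clm_apply contDiff_const
  have h2 : (uncurry (pdx f)) = fun p : ℝ × ℝ => fderiv ℝ (uncurry f) p (1, 0) := by
    funext p
    exact pdx_eq_fderiv hf p.1 p.2
  rw [Smooth2, h2]; exact h1

lemma Smooth2.smooth_PD {f : ℝ → ℝ → ℝ} (hf : Smooth2 f) (n : ℕ) : Smooth2 (PD n f) := by
  induction n with
  | zero => exact hf
  | succ n ih => rw [PD_succ']; exact ih.smooth_pdx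

/-- Commutation of the two partial derivatives for smooth functions. -/
lemma Smooth2.pdx_pdt_comm {f : ℝ → ℝ → ℝ} (hf : Smooth2 f) (x t : ℝ) :
    pdx (pdt f) x t = pdt (pdx f) x t := by
  set F := uncurry f with hF
  have hdF : ContDiff ℝ (⊤ : ℕ∞) (fderiv ℝ F) := hf.fderiv_right (by simp)
  -- pdx (pdt f) x t = fderiv (fderiv F) (x,t) (1,0) (0,1)
  have key : ∀ (v w : ℝ × ℝ),
      deriv (fun y : ℝ => fderiv ℝ F ((fun q : ℝ => (q, t)) y) v) x
        = fderiv ℝ (fderiv ℝ F) (x, t) (1, 0) v := by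
    intro v w
    have hD : HasFDerivAt (fderiv ℝ F) (fderiv ℝ (fderiv ℝ F) (x, t)) (x, t) :=
      ((hdF.differentiable (by simp)) (x, t)).hasFDerivAt
    have h1 : HasDerivAt (fun y : ℝ => fderiv ℝ F (y, t))
        (fderiv ℝ (fderiv ℝ F) (x, t) (1, 0)) x :=
      hD.comp_hasDerivAt x (hasDerivAt_line_x x t)
    have h2 : HasDerivAt (fun y : ℝ => fderiv ℝ F (y, t) v)
        (fderiv ℝ (fderiv ℝ F) (x, t) (1, 0) v + 0) x := by
      have := h1.clm_apply (hasDerivAt_const x v)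
      simpa using this
    simpa using h2.deriv
  have key' : ∀ (v : ℝ × ℝ),
      deriv (fun s : ℝ => fderiv ℝ F (x, s) v) t
        = fderiv ℝ (fderiv ℝ F) (x, t) (0, 1) v := by
    intro v
    have hD : HasFDerivAt (fderiv ℝ F) (fderiv ℝ (fderiv ℝ F) (x, t)) (x, t) :=
      ((hdF.differentiable (by simp)) (x, t)).hasFDerivAt
    have h1 : HasDerivAt (fun s : ℝ => fderiv ℝ F (x, s))
        (fderiv ℝ (fderiv ℝ F) (x, t) (0, 1)) t :=
      hD.comp_hasDerivAt t (hasDerivAt_line_t x t)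
    have h2 := h1.clm_apply (hasDerivAt_const t v)
    simpa using h2.deriv
  have hsymm : fderiv ℝ (fderiv ℝ F) (x, t) (1, 0) (0, 1)
      = fderiv ℝ (fderiv ℝ F) (x, t) (0, 1) (1, 0) := by
    have := (hf.contDiffAt (x := (x, t))).isSymmSndFDerivAt (by rw [minSmoothness_of_isRCLikeNormedField]; exact WithTop.coe_le_coe.mpr (le_top : (2 : ℕ∞) ≤ ⊤))
    exact this.eq (1, 0) (0, 1)
  have e1 : pdx (pdt f) x t = fderiv ℝ (fderiv ℝ F) (x, t) (1, 0) (0, 1) := by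
    have : pdx (pdt f) x t = deriv (fun y => pdt f y t) x := rfl
    rw [this]
    have : (fun y => pdt f y t) = fun y : ℝ => fderiv ℝ F (y, t) (0, 1) := by
      funext y; exact pdt_eq_fderiv hf y t
    rw [this]
    exact key (0, 1) (0, 1)
  have e2 : pdt (pdx f) x t = fderiv ℝ (fderiv ℝ F) (x, t) (0, 1) (1, 0) := by
    have : pdt (pdx f) x t = deriv (fun s => pdx f x s) t := rfl
    rw [this]
    have : (fun s => pdx f x s) = fun s : ℝ => fderiv ℝ F (x, s) (1, 0) := by
      funext s; exact pdx_eq_fderiv hf x s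
    rw [this]
    exact key' (1, 0)
  rw [e1, e2, hsymm]

lemma Smooth2.pdt_PD {f : ℝ → ℝ → ℝ} (hf : Smooth2 f) (n : ℕ) :
    pdt (PD n f) = PD n (pdt f) := by
  induction n with
  | zero => rfl
  | succ n ih =>
      rw [PD_succ', PD_succ']
      have h1 : pdt (pdx (PD n f)) = pdx (pdt (PD n f)) := by
        funext x t
        exact ((hf.smooth_PD n).pdx_pdt_comm x t).symm
      rw [h1, ih]



/-- Pointwise product of two-variable functions. -/
def fmul (f g : ℝ → ℝ → ℝ) : ℝ → ℝ → ℝ := fun x t => f x t * g x t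

lemma Smooth2.fmulx {f g : ℝ → ℝ → ℝ} (hf : Smooth2 f) (hg : Smooth2 g) :
    Smooth2 (fmul f g) := ContDiff.mul hf hg

lemma Smooth2.fadd {f g : ℝ → ℝ → ℝ} (hf : Smooth2 f) (hg : Smooth2 g) :
    Smooth2 (fun x t => f x t + g x t) := ContDiff.add hf hg

lemma smooth2_zero : Smooth2 (fun _ _ => (0:ℝ)) := contDiff_const

lemma pdx_mul {f g : ℝ → ℝ → ℝ} (hf : Smooth2 f) (hg : Smooth2 g) (x t : ℝ) :
    pdx (fmul f g) x t = pdx f x t * g x t + f x t * pdx g x t :=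
  ((hf.hasDerivAt_x x t).mul (hg.hasDerivAt_x x t)).deriv

lemma pdx_sub {f g : ℝ → ℝ → ℝ} (hf : Smooth2 f) (hg : Smooth2 g) (x t : ℝ) :
    pdx (fun x t => f x t - g x t) x t = pdx f x t - pdx g x t :=
  ((hf.hasDerivAt_x x t).sub (hg.hasDerivAt_x x t)).deriv

lemma PD_sub {f g : ℝ → ℝ → ℝ} (hf : Smooth2 f) (hg : Smooth2 g) (n : ℕ) :
    PD n (fun x t => f x t - g x t) = fun x t => PD n f x t - PD n g x t := by
  induction n with
  | zero => rfl
  | succ n ih =>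
      rw [PD_succ', ih, PD_succ', PD_succ']
      funext x t
      exact pdx_sub (hf.smooth_PD n) (hg.smooth_PD n) x t

/-- The strictly-lower-triangular coefficient functions appearing when `x`-differentiating
a product `P·σ` with `∂σ = Q·φ` repeatedly. -/
noncomputable def Bco (P Q : ℝ → ℝ → ℝ) : ℕ → ℕ → (ℝ → ℝ → ℝ)
  | 0, _ => fun _ _ => 0
  | (i+1), 0 => fun x t => pdx (Bco P Q i 0) x t + Q x t * PD i P x t
  | (i+1), (p+1) => fun x t => pdx (Bco P Q i (p+1)) x t + Bco P Q i p x t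

lemma smooth_Bco {P Q : ℝ → ℝ → ℝ} (hP : Smooth2 P) (hQ : Smooth2 Q) :
    ∀ i p, Smooth2 (Bco P Q i p) := by
  intro i
  induction i with
  | zero => intro p; exact smooth2_zero
  | succ i ih =>
      intro p
      cases p with
      | zero => exact ((ih 0).smooth_pdx).fadd (hQ.fmulx (hP.smooth_PD i))
      | succ p => exact ((ih (p+1)).smooth_pdx).fadd (ih p)

lemma pdx_zero_fun : pdx (fun _ _ => (0:ℝ)) = fun _ _ => (0:ℝ) := by
  funext x t; simp [pdx]

lemma Bco_eq_zero {P Q : ℝ → ℝ → ℝ} : ∀ i p, i ≤ p → Bco P Q i p = fun _ _ => (0:ℝ) := by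
  intro i
  induction i with
  | zero => intro p _; rfl
  | succ i ih =>
      intro p hp
      cases p with
      | zero => omega
      | succ p =>
          have h1 : Bco P Q i (p+1) = fun _ _ => (0:ℝ) := ih (p+1) (by omega)
          have h2 : Bco P Q i p = fun _ _ => (0:ℝ) := ih p (by omega)
          show (fun x t => pdx (Bco P Q i (p+1)) x t + Bco P Q i p x t) = _
          rw [h1, h2, pdx_zero_fun]
          funext x t; simp

/-- Key structure lemma: iterated `x`-derivatives of `P·σ` where `∂σ = Q·φ`. -/
lemma PD_mul_structure {P Q σ φ : ℝ → ℝ → ℝ} (hP : Smooth2 P) (hQ : Smooth2 Q)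
    (hσ : Smooth2 σ) (hφ : Smooth2 φ)
    (hd : ∀ x t, pdx σ x t = Q x t * φ x t) :
    ∀ i, PD i (fmul P σ) = fun x t =>
      σ x t * PD i P x t + ∑ p ∈ Finset.range i, Bco P Q i p x t * PD p φ x t := by
  have hpdσ : pdx σ = fmul Q φ := by funext x t; exact hd x t
  intro i
  induction i with
  | zero => funext x t; simp [PD, fmul, mul_comm]
  | succ i ih =>
      rw [PD_succ', ih]
      funext x t
      -- differentiate the sum expression
      have hsmul : ∀ p : ℕ, Smooth2 (fun x t => Bco P Q i p x t * PD p φ x t) :=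
        fun p => (smooth_Bco hP hQ i p).fmulx (hφ.smooth_PD p)
      have hterm : ∀ p : ℕ, HasDerivAt (fun y => Bco P Q i p y t * PD p φ y t)
          (pdx (Bco P Q i p) x t * PD p φ x t + Bco P Q i p x t * PD (p+1) φ x t) x := by
        intro p
        have h1 := (smooth_Bco hP hQ i p).hasDerivAt_x x t
        have h2 := (hφ.smooth_PD p).hasDerivAt_x x t
        have := h1.mul h2
        rwa [← PD_succ'] at this
      have hmain : HasDerivAt (fun y => σ y t * PD i P y t)
          (Q x t * φ x t * PD i P x t + σ x t * PD (i+1) P x t) x := by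
        have h1 := hσ.hasDerivAt_x x t
        have h2 := (hP.smooth_PD i).hasDerivAt_x x t
        have := h1.mul h2
        rwa [hd x t, ← PD_succ'] at this
      have hsum : HasDerivAt (fun y => ∑ p ∈ Finset.range i, Bco P Q i p y t * PD p φ y t)
          (∑ p ∈ Finset.range i,
            (pdx (Bco P Q i p) x t * PD p φ x t + Bco P Q i p x t * PD (p+1) φ x t)) x :=
        HasDerivAt.fun_sum (fun p _ => hterm p)
      have htotal := hmain.add hsum
      have : pdx (fun x t => σ x t * PD i P x t +
          ∑ p ∈ Finset.range i, Bco P Q i p x t * PD p φ x t) x t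
          = Q x t * φ x t * PD i P x t + σ x t * PD (i+1) P x t +
            ∑ p ∈ Finset.range i,
              (pdx (Bco P Q i p) x t * PD p φ x t + Bco P Q i p x t * PD (p+1) φ x t) :=
        htotal.deriv
      rw [this]
      -- rearrange into the claimed form
      have e1 : ∑ p ∈ Finset.range (i+1), Bco P Q (i+1) p x t * PD p φ x t
          = (∑ p ∈ Finset.range i,
              (pdx (Bco P Q i (p+1)) x t + Bco P Q i p x t) * PD (p+1) φ x t)
            + (pdx (Bco P Q i 0) x t + Q x t * PD i P x t) * PD 0 φ x t := by
        rw [Finset.sum_range_succ']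
        simp only [Bco]
      have e4 : ∑ p ∈ Finset.range i, pdx (Bco P Q i p) x t * PD p φ x t
          = (∑ p ∈ Finset.range i, pdx (Bco P Q i (p+1)) x t * PD (p+1) φ x t)
            + pdx (Bco P Q i 0) x t * PD 0 φ x t := by
        have h0 : ∑ p ∈ Finset.range i, pdx (Bco P Q i p) x t * PD p φ x t
            = ∑ p ∈ Finset.range (i+1), pdx (Bco P Q i p) x t * PD p φ x t := by
          rw [Finset.sum_range_succ]
          have hz : Bco P Q i i = fun _ _ => (0:ℝ) := Bco_eq_zero i i le_rfl
          rw [hz, pdx_zero_fun]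
          simp
        rw [h0, Finset.sum_range_succ']
      have e5 : (∑ p ∈ Finset.range i, pdx (Bco P Q i (p+1)) x t * PD (p+1) φ x t)
            + ∑ p ∈ Finset.range i, Bco P Q i p x t * PD (p+1) φ x t
          = ∑ p ∈ Finset.range i,
              (pdx (Bco P Q i (p+1)) x t + Bco P Q i p x t) * PD (p+1) φ x t := by
        rw [← Finset.sum_add_distrib]
        exact Finset.sum_congr rfl fun p _ => by ring
      rw [Finset.sum_add_distrib, e1, e4]
      have hφ0 : PD 0 φ x t = φ x t := rfl
      rw [hφ0]
      linear_combination e5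

section DetCalc

/-- `det (A.updateCol j (e_i)) = adjugate A j i`. -/
lemma det_updateColumn_single {R : Type*} [CommRing R] {n : Type*} [DecidableEq n] [Fintype n]
    (A : Matrix n n R) (i j : n) :
    (A.updateCol j (Pi.single i 1)).det = A.adjugate j i := by
  have h1 : A.updateCol j (Pi.single i 1) = ((Aᵀ).updateRow j (Pi.single i 1))ᵀ := by
    rw [← Matrix.updateCol_transpose, Matrix.transpose_transpose]
  rw [h1, Matrix.det_transpose, ← Matrix.adjugate_apply]
  have h2 : (Aᵀ).adjugate = (A.adjugate)ᵀ := (Matrix.adjugate_transpose A).symm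
  rw [h2]; rfl

/-- Derivative of the determinant of a matrix-valued function, column version. -/
lemma hasDerivAt_det {n : ℕ} {M : ℝ → Matrix (Fin n) (Fin n) ℝ}
    {M' : Matrix (Fin n) (Fin n) ℝ} {t : ℝ}
    (h : ∀ i j, HasDerivAt (fun s => M s i j) (M' i j) t) :
    HasDerivAt (fun s => (M s).det)
      (∑ j, ((M t).updateCol j (fun i => M' i j)).det) t := by
  have h2 : (fun s => (M s).det) = fun s => ∑ σ : Equiv.Perm (Fin n),
      ((Equiv.Perm.sign σ : ℤ) : ℝ) * ∏ i, M s (σ i) i := by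
    funext s; exact Matrix.det_apply' (M s)
  have h1 : HasDerivAt (fun s => ∑ σ : Equiv.Perm (Fin n),
      ((Equiv.Perm.sign σ : ℤ) : ℝ) * ∏ i, M s (σ i) i)
      (∑ σ : Equiv.Perm (Fin n), ((Equiv.Perm.sign σ : ℤ) : ℝ) *
        ∑ j, (∏ i ∈ Finset.univ.erase j, M t (σ i) i) * M' (σ j) j) t := by
    apply HasDerivAt.fun_sum
    intro σ _
    have := (HasDerivAt.finset_prod (fun i (_ : i ∈ Finset.univ) => h (σ i) i)).const_mul
      ((Equiv.Perm.sign σ : ℤ) : ℝ)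
    simpa [smul_eq_mul] using this
  rw [h2]
  convert h1 using 1
  -- value identification
  have key : ∀ j, ((M t).updateCol j (fun i => M' i j)).det
      = ∑ σ : Equiv.Perm (Fin n), ((Equiv.Perm.sign σ : ℤ) : ℝ) *
          (M' (σ j) j * ∏ i ∈ Finset.univ.erase j, M t (σ i) i) := by
    intro j
    rw [Matrix.det_apply']
    apply Finset.sum_congr rfl
    intro σ _
    congr 1
    rw [← Finset.mul_prod_erase Finset.univ _ (Finset.mem_univ j)]
    congr 1
    · exact Matrix.updateCol_self
    · apply Finset.prod_congr rfl
      intro i hi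
      exact Matrix.updateCol_ne (Finset.ne_of_mem_erase hi)
  calc ∑ j, ((M t).updateCol j (fun i => M' i j)).det
      = ∑ j, ∑ σ : Equiv.Perm (Fin n), ((Equiv.Perm.sign σ : ℤ) : ℝ) *
          (M' (σ j) j * ∏ i ∈ Finset.univ.erase j, M t (σ i) i) := by
        exact Finset.sum_congr rfl fun j _ => key j
    _ = ∑ σ : Equiv.Perm (Fin n), ∑ j, ((Equiv.Perm.sign σ : ℤ) : ℝ) *
          (M' (σ j) j * ∏ i ∈ Finset.univ.erase j, M t (σ i) i) := Finset.sum_comm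
    _ = ∑ σ : Equiv.Perm (Fin n), ((Equiv.Perm.sign σ : ℤ) : ℝ) *
          ∑ j, (∏ i ∈ Finset.univ.erase j, M t (σ i) i) * M' (σ j) j := by
        apply Finset.sum_congr rfl
        intro σ _
        rw [Finset.mul_sum]
        exact Finset.sum_congr rfl fun j _ => by ring

/-- Derivative of the determinant, row version. -/
lemma hasDerivAt_det_row {n : ℕ} {M : ℝ → Matrix (Fin n) (Fin n) ℝ}
    {M' : Matrix (Fin n) (Fin n) ℝ} {t : ℝ}
    (h : ∀ i j, HasDerivAt (fun s => M s i j) (M' i j) t) :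
    HasDerivAt (fun s => (M s).det)
      (∑ i, ((M t).updateRow i (fun j => M' i j)).det) t := by
  have hT : ∀ i j, HasDerivAt (fun s => (M s)ᵀ i j) (M'ᵀ i j) t := fun i j => h j i
  have h1 := hasDerivAt_det (M := fun s => (M s)ᵀ) (M' := M'ᵀ) hT
  have h2 : (fun s => ((M s)ᵀ).det) = fun s => (M s).det := by
    funext s; exact Matrix.det_transpose (M s)
  rw [h2] at h1
  convert h1 using 1
  apply Finset.sum_congr rfl
  intro i _
  have : ((M t)ᵀ).updateCol i (fun j => M'ᵀ j i) = ((M t).updateRow i (fun j => M' i j))ᵀ := by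
    rw [← Matrix.updateCol_transpose]
    rfl
  rw [this, Matrix.det_transpose]

/-- If `B` has zero diagonal, adding `B`-combinations of rows to each column, summed over
columns, contributes nothing to the determinant. -/
lemma sum_det_updateColumn_mul_eq_zero {n : ℕ} (A B : Matrix (Fin n) (Fin n) ℝ)
    (hB : ∀ i, B i i = 0) :
    ∑ j, (A.updateCol j (fun i => ∑ p, B i p * A p j)).det = 0 := by
  have expand : ∀ j : Fin n, (A.updateCol j (fun i => ∑ p, B i p * A p j)).det
      = ∑ i, (B * A) i j * A.adjugate j i := by
    intro j
    have hv : (fun i => ∑ p, B i p * A p j) = ∑ i, Pi.single i ((B * A) i j) := by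
      rw [Finset.univ_sum_single (fun i => (B * A) i j)]
      funext i
      simp [Matrix.mul_apply]
    have hv2 : (fun i => ∑ p, B i p * A p j) = ∑ i, ((B * A) i j) • (Pi.single i (1:ℝ) : Fin n → ℝ) := by
      rw [hv]
      apply Finset.sum_congr rfl
      intro i _
      ext r
      simp [Pi.single_apply, mul_ite]
    rw [← Matrix.cramer_apply, hv2, map_sum]
    simp only [LinearMap.map_smul]
    rw [Finset.sum_apply]
    apply Finset.sum_congr rfl
    intro i _
    rw [Pi.smul_apply, Matrix.cramer_apply, det_updateColumn_single, smul_eq_mul]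
  calc ∑ j, (A.updateCol j (fun i => ∑ p, B i p * A p j)).det
      = ∑ j, ∑ i, (B * A) i j * A.adjugate j i := Finset.sum_congr rfl fun j _ => expand j
    _ = ∑ i, ∑ j, (B * A) i j * A.adjugate j i := Finset.sum_comm
    _ = ∑ i, ((B * A) * A.adjugate) i i := by
        apply Finset.sum_congr rfl
        intro i _
        rw [Matrix.mul_apply]
    _ = Matrix.trace ((B * A) * A.adjugate) := rfl
    _ = 0 := by
        rw [mul_assoc, Matrix.mul_adjugate]
        rw [Matrix.mul_smul, mul_one, Matrix.trace_smul]
        have : Matrix.trace B = 0 := by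
          rw [Matrix.trace]
          exact Finset.sum_eq_zero fun i _ => hB i
        rw [this, smul_zero]

end DetCalc

section Desnanot

variable {R : Type*} [CommRing R] {n : Type*} [DecidableEq n] [Fintype n]

lemma det_updateColumn_single' (A : Matrix n n R) (i j : n) :
    (A.updateCol j (Pi.single i 1)).det = A.adjugate j i := by
  have h1 : A.updateCol j (Pi.single i 1) = ((Aᵀ).updateRow j (Pi.single i 1))ᵀ := by
    rw [← Matrix.updateCol_transpose, Matrix.transpose_transpose]
  rw [h1, Matrix.det_transpose, ← Matrix.adjugate_apply]
  have h2 : (Aᵀ).adjugate = (A.adjugate)ᵀ := (Matrix.adjugate_transpose A).symm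
  rw [h2]; rfl

lemma updateColumn_comm' (A : Matrix n n R) {j₁ j₂ : n} (h : j₁ ≠ j₂) (u v : n → R) :
    (A.updateCol j₁ u).updateCol j₂ v = (A.updateCol j₂ v).updateCol j₁ u := by
  ext r c
  rcases eq_or_ne c j₁ with h1 | h1
  · rcases eq_or_ne c j₂ with h2 | h2
    · exact absurd (h1.symm.trans h2) h
    · rw [Matrix.updateCol_ne h2, h1, Matrix.updateCol_self, Matrix.updateCol_self]
  · rcases eq_or_ne c j₂ with h2 | h2
    · rw [h2, Matrix.updateCol_self, Matrix.updateCol_ne (h2 ▸ h1), Matrix.updateCol_self]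
    · rw [Matrix.updateCol_ne h2, Matrix.updateCol_ne h1,
        Matrix.updateCol_ne h1, Matrix.updateCol_ne h2]

lemma det_one_two_single {j₁ j₂ : n} (hj : j₁ ≠ j₂) (p i : n) :
    (((1 : Matrix n n R).updateCol j₂ (Pi.single i 1)).updateCol j₁
      (Pi.single p 1)).det
    = (if p = j₁ ∧ i = j₂ then 1 else 0) - (if p = j₂ ∧ i = j₁ then 1 else 0) := by
  set g : n → n := fun c => if c = j₁ then p else if c = j₂ then i else c with hg
  have hM : (((1 : Matrix n n R).updateCol j₂ (Pi.single i 1)).updateCol j₁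
      (Pi.single p 1)) = (1 : Matrix n n R).submatrix id g := by
    ext r c
    rcases eq_or_ne c j₁ with h1 | h1
    · rw [h1, Matrix.updateCol_self]
      simp [hg, Matrix.one_apply, Pi.single_apply]
    · rcases eq_or_ne c j₂ with h2 | h2
      · rw [Matrix.updateCol_ne h1, h2, Matrix.updateCol_self]
        simp [hg, h2 ▸ h1, Matrix.one_apply, Pi.single_apply]
      · rw [Matrix.updateCol_ne h1, Matrix.updateCol_ne h2]
        simp [hg, h1, h2, Matrix.one_apply]
  rw [hM]
  by_cases hc1 : p = j₁ ∧ i = j₂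
  · have : g = id := by
      funext c
      simp only [hg, id]
      split_ifs with a b
      · rw [a, hc1.1]
      · rw [b, hc1.2]
      · rfl
    rw [this]
    rw [Matrix.submatrix_id_id, Matrix.det_one, if_pos hc1,
      if_neg (fun h : p = j₂ ∧ i = j₁ => hj (hc1.1.symm.trans h.1))]
    ring
  · by_cases hc2 : p = j₂ ∧ i = j₁
    · have : g = fun c => Equiv.swap j₁ j₂ c := by
        funext c
        simp only [hg, Equiv.swap_apply_def]
        split_ifs with a b
        · rw [hc2.1]
        · rw [hc2.2]
        · rfl
      rw [this]
      have := Matrix.det_permute' (Equiv.swap j₁ j₂) (1 : Matrix n n R)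
      rw [show ((Equiv.swap j₁ j₂ : Equiv.Perm n) : n → n) = fun c => Equiv.swap j₁ j₂ c from rfl] at this
      rw [this, Equiv.Perm.sign_swap hj, Matrix.det_one]
      rw [if_neg hc1, if_pos hc2]
      simp
    · -- degenerate: g is not injective; find two distinct columns with equal g-value
      have hz : ∃ c₁ c₂ : n, c₁ ≠ c₂ ∧ g c₁ = g c₂ := by
        rcases eq_or_ne p j₁ with hp1 | hp1
        · -- then i ≠ j₂ (else case 1)
          have hi2 : i ≠ j₂ := fun h => hc1 ⟨hp1, h⟩
          rcases eq_or_ne i j₁ with hi1 | hi1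
          · exact ⟨j₁, j₂, hj, by simp [hg, hj.symm, hi2, hp1, hi1]⟩
          · exact ⟨j₂, i, fun h => hi2 h.symm, by
              simp [hg, hj.symm, hi2, hi1]⟩
        · rcases eq_or_ne p j₂ with hp2 | hp2
          · have hi1 : i ≠ j₁ := fun h => hc2 ⟨hp2, h⟩
            rcases eq_or_ne i j₂ with hi2 | hi2
            · exact ⟨j₁, j₂, hj, by simp [hg, hj.symm, hp2, hi2]⟩
            · exact ⟨j₂, i, fun h => hi2 h.symm, by simp [hg, hj.symm, hi1, hi2, hp2]⟩
          · exact ⟨j₁, p, fun h => hp1 h.symm, by simp [hg, hp1, hp2]⟩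
      obtain ⟨c₁, c₂, hne, hgeq⟩ := hz
      have : ((1 : Matrix n n R).submatrix id g).det = 0 := by
        apply Matrix.det_zero_of_column_eq hne
        intro k
        show (1 : Matrix n n R) (id k) (g c₁) = (1 : Matrix n n R) (id k) (g c₂)
        rw [hgeq]
      rw [this]
      simp [hc1, hc2]


lemma det_two_updateColumn_one {j₁ j₂ : n} (hj : j₁ ≠ j₂) (u v : n → R) :
    (((1 : Matrix n n R).updateCol j₁ u).updateCol j₂ v).det
      = u j₁ * v j₂ - u j₂ * v j₁ := by
  have expand : ∀ (M : Matrix n n R) (j : n) (w : n → R),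
      (M.updateCol j w).det = ∑ i, w i * (M.updateCol j (Pi.single i 1)).det := by
    intro M j w
    have hw : w = ∑ i, (w i) • (Pi.single i (1:R) : n → R) := by
      rw [← Finset.univ_sum_single w]
      apply Finset.sum_congr rfl
      intro i _
      ext r
      simp [Pi.single_apply, mul_ite]
    rw [← Matrix.cramer_apply]
    conv_lhs => rw [hw]
    rw [map_sum, Finset.sum_apply]
    apply Finset.sum_congr rfl
    intro i _
    rw [LinearMap.map_smul, Pi.smul_apply, Matrix.cramer_apply, smul_eq_mul]
  rw [expand]
  have step : ∀ i, (((1 : Matrix n n R).updateCol j₁ u).updateCol j₂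
      (Pi.single i 1)).det = ∑ p, u p *
        ((if p = j₁ ∧ i = j₂ then (1:R) else 0) - (if p = j₂ ∧ i = j₁ then 1 else 0)) := by
    intro i
    rw [updateColumn_comm' _ hj, expand]
    apply Finset.sum_congr rfl
    intro p _
    rw [det_one_two_single hj p i]
  calc ∑ i, v i * (((1 : Matrix n n R).updateCol j₁ u).updateCol j₂ (Pi.single i 1)).det
      = ∑ i, v i * ∑ p, u p *
          ((if p = j₁ ∧ i = j₂ then (1:R) else 0) - (if p = j₂ ∧ i = j₁ then 1 else 0)) := by
        exact Finset.sum_congr rfl fun i _ => by rw [step i]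
    _ = u j₁ * v j₂ - u j₂ * v j₁ := by
        have inner : ∀ i, ∑ p, u p *
            ((if p = j₁ ∧ i = j₂ then (1:R) else 0) - (if p = j₂ ∧ i = j₁ then 1 else 0))
            = (if i = j₂ then u j₁ else 0) - (if i = j₁ then u j₂ else 0) := by
          intro i
          rw [show ∀ (f : n → R), ∑ p, f p = ∑ p, f p from fun _ => rfl]
          simp only [mul_sub, Finset.sum_sub_distrib, mul_ite, mul_one, mul_zero, ite_and]
          congr 1
          · rw [Finset.sum_ite_eq' Finset.univ j₁ (fun p => if i = j₂ then u p else 0)]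
            simp
          · rw [Finset.sum_ite_eq' Finset.univ j₂ (fun p => if i = j₁ then u p else 0)]
            simp
        calc ∑ i, v i * ∑ p, u p *
            ((if p = j₁ ∧ i = j₂ then (1:R) else 0) - (if p = j₂ ∧ i = j₁ then 1 else 0))
            = ∑ i, v i * ((if i = j₂ then u j₁ else 0) - (if i = j₁ then u j₂ else 0)) := by
              exact Finset.sum_congr rfl fun i _ => by rw [inner i]
          _ = ∑ i, ((if i = j₂ then v i * u j₁ else 0) - (if i = j₁ then v i * u j₂ else 0)) := by
              apply Finset.sum_congr rfl
              intro i _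
              rw [mul_sub, mul_ite, mul_ite, mul_zero]
          _ = u j₁ * v j₂ - u j₂ * v j₁ := by
              rw [Finset.sum_sub_distrib,
                Finset.sum_ite_eq' Finset.univ j₂ (fun i => v i * u j₁),
                Finset.sum_ite_eq' Finset.univ j₁ (fun i => v i * u j₂)]
              simp [mul_comm]

/-- Desnanot–Jacobi identity in cofactor form, over an arbitrary commutative ring. -/
theorem desnanot_jacobi (A : Matrix n n R) {i₁ i₂ j₁ j₂ : n} (hi : i₁ ≠ i₂) (hj : j₁ ≠ j₂) :
    A.det * ((A.updateCol j₁ (Pi.single i₁ 1)).updateCol j₂ (Pi.single i₂ 1)).det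
    = (A.updateCol j₁ (Pi.single i₁ 1)).det * (A.updateCol j₂ (Pi.single i₂ 1)).det
      - (A.updateCol j₁ (Pi.single i₂ 1)).det * (A.updateCol j₂ (Pi.single i₁ 1)).det := by
  -- first prove it for the generic matrix over `MvPolynomial (n × n) ℤ`
  suffices hgen : ∀ (S : Type _) [CommRing S] [IsDomain S] (B : Matrix n n S),
      B.det ≠ 0 →
      B.det * ((B.updateCol j₁ (Pi.single i₁ 1)).updateCol j₂ (Pi.single i₂ 1)).det
      = (B.updateCol j₁ (Pi.single i₁ 1)).det * (B.updateCol j₂ (Pi.single i₂ 1)).det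
        - (B.updateCol j₁ (Pi.single i₂ 1)).det * (B.updateCol j₂ (Pi.single i₁ 1)).det by
    let A' := Matrix.mvPolynomialX n n ℤ
    have hA' := hgen (MvPolynomial (n × n) ℤ) A'
      (Matrix.det_mvPolynomialX_ne_zero n ℤ)
    -- specialize via the evaluation ring hom
    let φ : MvPolynomial (n × n) ℤ →+* R :=
      (MvPolynomial.aeval fun p : n × n => A p.1 p.2).toRingHom
    have hmap : ∀ (M : Matrix n n (MvPolynomial (n × n) ℤ)) (j : n) (i : n),
        φ.mapMatrix (M.updateCol j (Pi.single i 1))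
          = (φ.mapMatrix M).updateCol j (Pi.single i 1) := by
      intro M j i
      ext r c
      rcases eq_or_ne c j with h | h
      · rw [h]
        show φ (M.updateCol j (Pi.single i 1) r j) = _
        rw [Matrix.updateCol_self, Matrix.updateCol_self]
        rcases eq_or_ne r i with h2 | h2
        · rw [h2]; simp
        · rw [Pi.single_eq_of_ne h2, Pi.single_eq_of_ne h2]; simp
      · show φ (M.updateCol j (Pi.single i 1) r c) = _
        rw [Matrix.updateCol_ne h, Matrix.updateCol_ne h]
        rfl
    have hAA : φ.mapMatrix A' = A := Matrix.mvPolynomialX_mapMatrix_aeval (R := ℤ) A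
    have := congrArg φ hA'
    rw [_root_.map_mul, map_sub, _root_.map_mul, _root_.map_mul, RingHom.map_det, RingHom.map_det,
      RingHom.map_det, RingHom.map_det, RingHom.map_det, RingHom.map_det] at this
    simp only [hmap] at this
    rw [hAA] at this
    exact this
  intro S _ _ B hB
  -- the `C` matrix built from adjugate columns
  set C : Matrix n n S := (((1 : Matrix n n S).updateCol j₁ (fun r => B.adjugate r i₁)).updateCol
    j₂ (fun r => B.adjugate r i₂)) with hC
  have hBC : B * C = ((B.updateCol j₁ (B.det • (Pi.single i₁ 1 : n → S))).updateCol
      j₂ (B.det • (Pi.single i₂ 1 : n → S))) := by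
    ext r c
    rw [Matrix.mul_apply]
    rcases eq_or_ne c j₂ with h2 | h2
    · rw [h2, Matrix.updateCol_self]
      have : ∀ k, C k j₂ = B.adjugate k i₂ := fun k => by rw [hC, Matrix.updateCol_self]
      calc ∑ k, B r k * C k j₂ = ∑ k, B r k * B.adjugate k i₂ := by
            exact Finset.sum_congr rfl fun k _ => by rw [this k]
        _ = (B * B.adjugate) r i₂ := (Matrix.mul_apply).symm
        _ = (B.det • (1 : Matrix n n S)) r i₂ := by rw [Matrix.mul_adjugate]
        _ = (B.det • (Pi.single i₂ 1 : n → S)) r := by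
            simp [Matrix.one_apply, Pi.single_apply, Pi.smul_apply]
    · rcases eq_or_ne c j₁ with h1 | h1
      · rw [Matrix.updateCol_ne h2, h1, Matrix.updateCol_self]
        have : ∀ k, C k j₁ = B.adjugate k i₁ := fun k => by
          rw [hC, Matrix.updateCol_ne (h1 ▸ h2 : j₁ ≠ j₂), Matrix.updateCol_self]
        calc ∑ k, B r k * C k j₁ = ∑ k, B r k * B.adjugate k i₁ := by
              exact Finset.sum_congr rfl fun k _ => by rw [this k]
          _ = (B * B.adjugate) r i₁ := (Matrix.mul_apply).symm
          _ = (B.det • (1 : Matrix n n S)) r i₁ := by rw [Matrix.mul_adjugate]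
          _ = (B.det • (Pi.single i₁ 1 : n → S)) r := by
              simp [Matrix.one_apply, Pi.single_apply, Pi.smul_apply]
      · rw [Matrix.updateCol_ne h2, Matrix.updateCol_ne h1]
        have : ∀ k, C k c = (1 : Matrix n n S) k c := fun k => by
          rw [hC, Matrix.updateCol_ne h2, Matrix.updateCol_ne h1]
        calc ∑ k, B r k * C k c = ∑ k, B r k * (1 : Matrix n n S) k c := by
              exact Finset.sum_congr rfl fun k _ => by rw [this k]
          _ = (B * (1 : Matrix n n S)) r c := (Matrix.mul_apply).symm
          _ = B r c := by rw [Matrix.mul_one]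
  have hdetC : C.det = B.adjugate j₁ i₁ * B.adjugate j₂ i₂
      - B.adjugate j₂ i₁ * B.adjugate j₁ i₂ := by
    rw [hC, det_two_updateColumn_one hj]
  set D2 : S := ((B.updateCol j₁ (Pi.single i₁ 1)).updateCol j₂ (Pi.single i₂ 1)).det
    with hD2
  have hRHSdet : ((B.updateCol j₁ (B.det • (Pi.single i₁ 1 : n → S))).updateCol
      j₂ (B.det • (Pi.single i₂ 1 : n → S))).det = B.det * (B.det * D2) := by
    rw [Matrix.det_updateCol_smul]
    rw [updateColumn_comm' _ hj, Matrix.det_updateCol_smul, updateColumn_comm' _ hj.symm]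
  have hcancel : C.det = B.det * D2 := by
    apply mul_left_cancel₀ hB
    calc B.det * C.det = (B * C).det := (Matrix.det_mul B C).symm
      _ = B.det * (B.det * D2) := by rw [hBC, hRHSdet]
  have hfin : B.det * D2 = B.adjugate j₁ i₁ * B.adjugate j₂ i₂
      - B.adjugate j₂ i₁ * B.adjugate j₁ i₂ := by rw [← hcancel]; exact hdetC
  rw [hfin, det_updateColumn_single', det_updateColumn_single',
    det_updateColumn_single', det_updateColumn_single']
  ring

end Desnanot

lemma val_succAbove {n : ℕ} (r : Fin (n+1)) (i : Fin n) :
    ((r.succAbove i : Fin (n+1)) : ℕ) = if (i:ℕ) < (r:ℕ) then (i:ℕ) else (i:ℕ)+1 := by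
  by_cases h : (i:ℕ) < (r:ℕ)
  · rw [if_pos h, Fin.succAbove_of_castSucc_lt r i (by rwa [Fin.lt_def])]
    rfl
  · rw [if_neg h, Fin.succAbove_of_le_castSucc r i (by rw [Fin.le_def]; exact Nat.le_of_not_lt h)]
    rfl

/-- Cofactor expansion: determinant with a basis-vector column. -/
lemma det_updateColumn_single_eq_minor {R : Type*} [CommRing R] {n : ℕ}
    (A : Matrix (Fin (n+1)) (Fin (n+1)) R) (r c : Fin (n+1)) :
    (A.updateCol c (Pi.single r 1)).det
      = (-1)^((r:ℕ)+(c:ℕ)) * (A.submatrix r.succAbove c.succAbove).det := by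
  rw [Matrix.det_succ_column (A.updateCol c (Pi.single r 1)) c]
  rw [Finset.sum_eq_single r]
  · rw [Matrix.updateCol_self]
    rw [show (Pi.single r (1:R) : Fin (n+1) → R) r = 1 by simp, mul_one]
    have heq : (A.updateCol c (Pi.single r 1)).submatrix r.succAbove c.succAbove
        = A.submatrix r.succAbove c.succAbove := by
      ext i j
      rw [Matrix.submatrix_apply, Matrix.submatrix_apply,
        Matrix.updateCol_ne (Fin.succAbove_ne c j)]
    rw [heq]
  · intro b _ hb
    rw [Matrix.updateCol_self, Pi.single_eq_of_ne hb, mul_zero, zero_mul]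
  · intro h
    exact absurd (Finset.mem_univ r) h

lemma wronskian_eq_det (m : ℕ) (g : Fin m → ℝ → ℝ → ℝ) (x t : ℝ) :
    wronskian m g x t = (Matrix.of fun i j : Fin m => PD (i : ℕ) (g j) x t).det := by
  unfold wronskian
  congr 1
  ext i j
  rw [Matrix.of_apply, Matrix.of_apply, iteratedDeriv_slice (g j) t (i : ℕ)]

lemma smooth2_wronskian {m : ℕ} {g : Fin m → ℝ → ℝ → ℝ} (hg : ∀ j, Smooth2 (g j)) :
    Smooth2 (wronskian m g) := by
  have h1 : wronskian m g = fun x t => ∑ σ : Equiv.Perm (Fin m),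
      ((Equiv.Perm.sign σ : ℤ) : ℝ) * ∏ i, PD ((σ i : Fin m) : ℕ) (g i) x t := by
    funext x t
    rw [wronskian_eq_det, Matrix.det_apply']
    apply Finset.sum_congr rfl
    intro σ _
    congr 1
  rw [Smooth2, h1]
  apply ContDiff.sum
  intro σ _
  apply ContDiff.mul contDiff_const
  apply contDiff_prod
  intro i _
  exact (hg i).smooth_PD ((σ i : Fin m) : ℕ)

lemma pdx_wronskian {m' : ℕ} {g : Fin (m'+1) → ℝ → ℝ → ℝ} (hg : ∀ j, Smooth2 (g j))
    (x t : ℝ) :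
    pdx (wronskian (m'+1) g) x t
      = (Matrix.of fun i j : Fin (m'+1) =>
          PD (if (i : ℕ) = m' then m'+1 else (i : ℕ)) (g j) x t).det := by
  set M : ℝ → Matrix (Fin (m'+1)) (Fin (m'+1)) ℝ :=
    fun y => Matrix.of fun i j : Fin (m'+1) => PD (i : ℕ) (g j) y t with hM
  have h0 : (fun y => wronskian (m'+1) g y t) = fun y => (M y).det := by
    funext y; rw [wronskian_eq_det]
  set M' : Matrix (Fin (m'+1)) (Fin (m'+1)) ℝ :=
    Matrix.of (fun i j : Fin (m'+1) => PD ((i : ℕ)+1) (g j) x t) with hM'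
  have hent : ∀ i j : Fin (m'+1), HasDerivAt (fun y => M y i j) (M' i j) x := by
    intro i j
    have := ((hg j).smooth_PD (i : ℕ)).hasDerivAt_x x t
    rw [← PD_succ'] at this
    exact this
  have hd := hasDerivAt_det_row hent
  have hval : pdx (wronskian (m'+1) g) x t
      = ∑ i, ((M x).updateRow i (fun j => M' i j)).det := by
    have : pdx (wronskian (m'+1) g) x t = deriv (fun y => wronskian (m'+1) g y t) x := rfl
    rw [this, h0]
    exact hd.deriv
  rw [hval]
  rw [Finset.sum_eq_single (Fin.last m')]
  · -- the surviving term
    congr 1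
    ext i j
    rcases eq_or_ne i (Fin.last m') with h | h
    · rw [h, Matrix.updateRow_self]
      have : ((Fin.last m' : Fin (m'+1)) : ℕ) = m' := rfl
      rw [Matrix.of_apply, if_pos this]
      rfl
    · rw [Matrix.updateRow_ne h]
      show PD (i:ℕ) (g j) x t = PD (if (i:ℕ) = m' then m'+1 else (i:ℕ)) (g j) x t
      rw [if_neg (show ¬ (i:ℕ) = m' from fun hh : (i:ℕ) = m' => h (Fin.ext hh))]
  · intro b _ hb
    have hblt : (b : ℕ) < m' := by
      have := b.isLt
      rcases Nat.lt_succ_iff_lt_or_eq.mp this with h | h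
      · exact h
      · exact absurd (Fin.ext h : b = Fin.last m') hb
    have hrow : (fun j => M' b j) = M x ⟨(b:ℕ)+1, by omega⟩ := by
      funext j
      rw [hM', hM]
      rfl
    rw [hrow]
    exact Matrix.det_updateRow_eq_zero (by
      intro hh
      have h2 := congrArg Fin.val hh
      simp only [Fin.val_mk] at h2
      omega)
  · intro h
    exact absurd (Finset.mem_univ _) h

/-- Desnanot–Jacobi specialised to Wronskian matrices. -/
lemma desnanot_wr (Φ : ℕ → ℝ → ℝ → ℝ) (m' : ℕ) (x t : ℝ) :
    Wr Φ (m'+2) x t * Wr Φ m' x t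
      = Wr Φ (m'+1) x t *
          (Matrix.of fun i j : Fin (m'+1) =>
            PD (if (i : ℕ) = m' then m'+1 else (i : ℕ))
              (Φ (if (j : ℕ) + 1 = m'+1 then (m'+1) + 1 else (j : ℕ) + 1)) x t).det
        - WrShift Φ (m'+1) x t *
          (Matrix.of fun i j : Fin (m'+1) =>
            PD (if (i : ℕ) = m' then m'+1 else (i : ℕ)) (Φ ((j : ℕ) + 1)) x t).det := by
  set A : Matrix (Fin (m'+2)) (Fin (m'+2)) ℝ :=
    Matrix.of (fun i j : Fin (m'+2) => PD (i : ℕ) (Φ ((j : ℕ)+1)) x t) with hA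
  have hm2 : m' < m' + 2 := by omega
  set r₁ : Fin (m'+2) := ⟨m', hm2⟩ with hr₁
  set r₂ : Fin (m'+2) := Fin.last (m'+1) with hr₂
  have hne : r₁ ≠ r₂ := by
    intro h
    have := congrArg Fin.val h
    simp [hr₁, hr₂] at this
  have hDJ := desnanot_jacobi A hne hne
  -- identify each of the five determinants
  have hsub_rr : ∀ i : Fin (m'+1), ((r₂.succAbove i : Fin (m'+2)) : ℕ) = (i : ℕ) := by
    intro i
    rw [val_succAbove]
    have : (i : ℕ) < ((r₂ : Fin (m'+2)) : ℕ) := by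
      simp only [hr₂, Fin.val_last]
      omega
    rw [if_pos this]
  have hsub_r1 : ∀ i : Fin (m'+1), ((r₁.succAbove i : Fin (m'+2)) : ℕ)
      = if (i : ℕ) = m' then m'+1 else (i : ℕ) := by
    intro i
    rw [val_succAbove]
    rcases eq_or_ne ((i : ℕ)) m' with h | h
    · rw [if_neg (by simp [hr₁, h]), if_pos h, h]
    · have : (i : ℕ) < m' := by have := i.isLt; omega
      rw [if_pos (by simpa [hr₁] using this), if_neg h]
  -- (a)
  have ha : (A.updateCol r₂ (Pi.single r₂ 1)).det = Wr Φ (m'+1) x t := by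
    rw [det_updateColumn_single_eq_minor, Wr, wronskian_eq_det]
    rw [show ((r₂:ℕ) + (r₂:ℕ)) = 2*(m'+1) by simp [hr₂]; ring]
    rw [pow_mul]
    norm_num
    congr 1
    ext i j
    show A (r₂.succAbove i) (r₂.succAbove j) = PD (i:ℕ) (Φ ((j:ℕ)+1)) x t
    rw [hA]
    show PD ((r₂.succAbove i : Fin (m'+2)) : ℕ)
        (Φ (((r₂.succAbove j : Fin (m'+2)) : ℕ)+1)) x t = _
    rw [hsub_rr i, hsub_rr j]
  -- (b)
  have hb : (A.updateCol r₁ (Pi.single r₁ 1)).det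
      = (Matrix.of fun i j : Fin (m'+1) =>
          PD (if (i : ℕ) = m' then m'+1 else (i : ℕ))
            (Φ (if (j : ℕ) + 1 = m'+1 then (m'+1) + 1 else (j : ℕ) + 1)) x t).det := by
    rw [det_updateColumn_single_eq_minor]
    rw [show ((r₁:ℕ) + (r₁:ℕ)) = 2*m' by simp [hr₁]; ring]
    rw [pow_mul]
    norm_num
    congr 1
    ext i j
    show A (r₁.succAbove i) (r₁.succAbove j) = _
    rw [hA]
    show PD ((r₁.succAbove i : Fin (m'+2)) : ℕ)
        (Φ (((r₁.succAbove j : Fin (m'+2)) : ℕ)+1)) x t = _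
    rw [hsub_r1 i, hsub_r1 j]
    rcases eq_or_ne ((j:ℕ)) m' with h | h <;> simp [h]
  -- (c)
  have hc : (A.updateCol r₁ (Pi.single r₂ 1)).det = - WrShift Φ (m'+1) x t := by
    rw [det_updateColumn_single_eq_minor]
    rw [show ((r₂:ℕ) + (r₁:ℕ)) = 2*m'+1 by simp [hr₂, hr₁]; ring]
    rw [pow_succ, pow_mul]
    norm_num
    rw [WrShift, wronskian_eq_det]
    congr 1
    ext i j
    show A (r₂.succAbove i) (r₁.succAbove j) = _
    rw [hA]
    show PD ((r₂.succAbove i : Fin (m'+2)) : ℕ)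
        (Φ (((r₁.succAbove j : Fin (m'+2)) : ℕ)+1)) x t = _
    rw [hsub_rr i, hsub_r1 j]
    rcases eq_or_ne ((j:ℕ)) m' with h | h <;> simp [h]
  -- (d)
  have hd : (A.updateCol r₂ (Pi.single r₁ 1)).det
      = - (Matrix.of fun i j : Fin (m'+1) =>
          PD (if (i : ℕ) = m' then m'+1 else (i : ℕ)) (Φ ((j : ℕ) + 1)) x t).det := by
    rw [det_updateColumn_single_eq_minor]
    rw [show ((r₁:ℕ) + (r₂:ℕ)) = 2*m'+1 by simp [hr₂, hr₁]; ring]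
    rw [pow_succ, pow_mul]
    norm_num
    congr 1
    ext i j
    show A (r₁.succAbove i) (r₂.succAbove j) = _
    rw [hA]
    show PD ((r₁.succAbove i : Fin (m'+2)) : ℕ)
        (Φ (((r₂.succAbove j : Fin (m'+2)) : ℕ)+1)) x t = _
    rw [hsub_r1 i, hsub_rr j]
    rfl
  -- (e) the double update
  have he : ((A.updateCol r₁ (Pi.single r₁ 1)).updateCol r₂ (Pi.single r₂ 1)).det
      = Wr Φ m' x t := by
    rw [det_updateColumn_single_eq_minor]
    rw [show ((r₂:ℕ) + (r₂:ℕ)) = 2*(m'+1) by simp [hr₂]; ring]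
    rw [pow_mul]
    norm_num
    -- the submatrix is the W_{m'+1} matrix with column m' replaced by e_{m'}
    have hstep : (A.updateCol r₁ (Pi.single r₁ 1)).submatrix r₂.succAbove r₂.succAbove
        = (A.submatrix r₂.succAbove r₂.succAbove).updateCol
            (⟨m', by omega⟩ : Fin (m'+1)) (Pi.single (⟨m', by omega⟩ : Fin (m'+1)) 1) := by
      ext i j
      rcases eq_or_ne ((j : ℕ)) m' with h | h
      · have hj1 : (r₂.succAbove j) = r₁ := by
          apply Fin.ext
          rw [hsub_rr j, h]
        have hj2 : j = (⟨m', by omega⟩ : Fin (m'+1)) := Fin.ext h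
        rw [Matrix.submatrix_apply, hj1, Matrix.updateCol_self, hj2,
          Matrix.updateCol_self]
        rcases eq_or_ne ((i : ℕ)) m' with h2 | h2
        · have : (r₂.succAbove i) = r₁ := by
            apply Fin.ext; rw [hsub_rr i, h2]
          rw [this]
          have h3 : i = (⟨m', by omega⟩ : Fin (m'+1)) := Fin.ext h2
          rw [h3]
          simp
        · have hne1 : (r₂.succAbove i) ≠ r₁ := by
            intro hh
            have := congrArg Fin.val hh
            rw [hsub_rr i] at this
            exact h2 this
          have hne2 : i ≠ (⟨m', by omega⟩ : Fin (m'+1)) := by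
            intro hh; exact h2 (congrArg Fin.val hh)
          rw [Pi.single_eq_of_ne hne1, Pi.single_eq_of_ne hne2]
      · have hj1 : (r₂.succAbove j) ≠ r₁ := by
          intro hh
          have := congrArg Fin.val hh
          rw [hsub_rr j] at this
          exact h this
        have hj2 : j ≠ (⟨m', by omega⟩ : Fin (m'+1)) := by
          intro hh; exact h (congrArg Fin.val hh)
        rw [Matrix.submatrix_apply, Matrix.updateCol_ne hj1, Matrix.updateCol_ne hj2]
        rfl
    rw [hstep]
    cases m' with
    | zero =>
        -- 1×1 case : updateColumn 0 (single 0 1) of a 1×1 matrix, det = 1 = W₀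
        rw [Wr]
        have : wronskian 0 (fun j => Φ ((j:ℕ)+1)) x t = 1 := by
          rw [wronskian_eq_det]
          exact Matrix.det_fin_zero
        rw [this, Matrix.det_fin_one]
        have h0 : (0 : Fin 1) = (⟨0, by omega⟩ : Fin (0+1)) := rfl
        rw [Matrix.updateCol_apply]
        rw [if_pos h0]
        simp [Pi.single_apply]
    | succ n =>
        rw [det_updateColumn_single_eq_minor]
        rw [show (((⟨n+1, by omega⟩ : Fin (n+2)):ℕ) + ((⟨n+1, by omega⟩ : Fin (n+2)):ℕ))
            = 2*(n+1) by simp; ring]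
        rw [pow_mul]
        norm_num
        rw [Wr, wronskian_eq_det]
        congr 1
        ext i j
        have hlt : ∀ p : Fin (n+1), (((⟨n+1, by omega⟩ : Fin (n+2)).succAbove p : Fin (n+2)) : ℕ)
            = (p : ℕ) := by
          intro p
          rw [val_succAbove]
          rw [if_pos (by exact p.isLt)]
        show A (r₂.succAbove ((⟨n+1, by omega⟩ : Fin (n+2)).succAbove i))
            (r₂.succAbove ((⟨n+1, by omega⟩ : Fin (n+2)).succAbove j)) = _
        rw [hA]
        show PD ((r₂.succAbove ((⟨n+1, by omega⟩ : Fin (n+2)).succAbove i) : Fin (n+3)) : ℕ)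
            (Φ (((r₂.succAbove ((⟨n+1, by omega⟩ : Fin (n+2)).succAbove j) : Fin (n+3)) : ℕ)+1))
            x t = _
        rw [hsub_rr, hsub_rr, hlt i, hlt j]
        rfl
  -- assemble
  have hdetA : A.det = Wr Φ (m'+2) x t := by
    rw [Wr, wronskian_eq_det]
  rw [hdetA, ha, hb, hc, hd, he] at hDJ
  rw [hDJ]
  ring

lemma pdt_Wr (k : ℕ) (Φ : ℕ → ℝ → ℝ → ℝ) (Ψ₁ : ℝ → ℝ → ℝ) (s : ℕ → ℝ → ℝ → ℝ)
    (hΦ : ∀ j, 1 ≤ j → j ≤ k + 1 → Smooth2 (Φ j))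
    (hΨ₁ : Smooth2 Ψ₁)
    (hs : ∀ j, 1 ≤ j → j ≤ k → Smooth2 (s j))
    (hpot : ∀ j, 1 ≤ j → j ≤ k → ∀ x t, pdx (s j) x t = Ψ₁ x t * Φ j x t)
    (hflow : ∀ j, 1 ≤ j → j ≤ k → ∀ x t,
      pdt (Φ j) x t = Φ 1 x t * s j x t - Φ (j + 1) x t)
    (m' : ℕ) (hmk : m' + 1 ≤ k) (x t : ℝ) :
    pdt (Wr Φ (m'+1)) x t
      = s 1 x t * Wr Φ (m'+1) x t - WrShift Φ (m'+1) x t := by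
  have hΦs : ∀ j : Fin (m'+1), Smooth2 (Φ ((j:ℕ)+1)) := by
    intro j
    exact hΦ _ (by omega) (by have := j.isLt; omega)
  have hΦs' : ∀ j : Fin (m'+1), Smooth2 (Φ ((j:ℕ)+2)) := by
    intro j
    exact hΦ _ (by omega) (by have := j.isLt; omega)
  have hss : ∀ j : Fin (m'+1), Smooth2 (s ((j:ℕ)+1)) := by
    intro j
    exact hs _ (by omega) (by have := j.isLt; omega)
  have hΦ1 : Smooth2 (Φ 1) := hΦ 1 le_rfl (by omega)
  set M : ℝ → Matrix (Fin (m'+1)) (Fin (m'+1)) ℝ :=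
    fun τ => Matrix.of (fun i j : Fin (m'+1) => PD (i:ℕ) (Φ ((j:ℕ)+1)) x τ) with hM
  set M' : Matrix (Fin (m'+1)) (Fin (m'+1)) ℝ :=
    Matrix.of (fun i j : Fin (m'+1) => PD (i:ℕ) (pdt (Φ ((j:ℕ)+1))) x t) with hM'
  have hent : ∀ i j : Fin (m'+1), HasDerivAt (fun τ => M τ i j) (M' i j) t := by
    intro i j
    have h1 := ((hΦs j).smooth_PD (i:ℕ)).hasDerivAt_t x t
    have h2 : pdt (PD (i:ℕ) (Φ ((j:ℕ)+1))) x t = PD (i:ℕ) (pdt (Φ ((j:ℕ)+1))) x t := by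
      rw [(hΦs j).pdt_PD (i:ℕ)]
    rw [h2] at h1
    exact h1
  have hval : pdt (Wr Φ (m'+1)) x t
      = ∑ j, ((M t).updateCol j (fun i => M' i j)).det := by
    have h0 : (fun τ => Wr Φ (m'+1) x τ) = fun τ => (M τ).det := by
      funext τ; rw [Wr, wronskian_eq_det]
    have : pdt (Wr Φ (m'+1)) x t = deriv (fun τ => Wr Φ (m'+1) x τ) t := rfl
    rw [this, h0]
    exact (hasDerivAt_det hent).deriv
  -- the B-matrix
  set B : Matrix (Fin (m'+1)) (Fin (m'+1)) ℝ :=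
    Matrix.of (fun i p : Fin (m'+1) => Bco (Φ 1) Ψ₁ (i:ℕ) (p:ℕ) x t) with hB
  -- column identification
  have hcol : ∀ j : Fin (m'+1), (fun i : Fin (m'+1) => M' i j)
      = (fun i : Fin (m'+1) => s ((j:ℕ)+1) x t * M t i 0)
        + (fun i : Fin (m'+1) => ∑ p, B i p * M t p j)
        - (fun i : Fin (m'+1) => PD (i:ℕ) (Φ ((j:ℕ)+2)) x t) := by
    intro j
    funext i
    show M' i j = _
    have hJ1 : 1 ≤ (j:ℕ)+1 := by omega
    have hJk : (j:ℕ)+1 ≤ k := by have := j.isLt; omega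
    have hflowJ : pdt (Φ ((j:ℕ)+1)) = fun a b =>
        fmul (Φ 1) (s ((j:ℕ)+1)) a b - Φ ((j:ℕ)+2) a b := by
      funext a b
      show pdt (Φ ((j:ℕ)+1)) a b = Φ 1 a b * s ((j:ℕ)+1) a b - Φ ((j:ℕ)+2) a b
      exact hflow ((j:ℕ)+1) hJ1 hJk a b
    have h1 : M' i j = PD (i:ℕ) (pdt (Φ ((j:ℕ)+1))) x t := rfl
    have h2 := PD_mul_structure hΦ1 hΨ₁ (hss j) (hΦs j)
      (hpot ((j:ℕ)+1) hJ1 hJk) (i:ℕ)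
    have h3 : PD (i:ℕ) (fmul (Φ 1) (s ((j:ℕ)+1))) x t
        = s ((j:ℕ)+1) x t * PD (i:ℕ) (Φ 1) x t
          + ∑ p ∈ Finset.range (i:ℕ), Bco (Φ 1) Ψ₁ (i:ℕ) p x t * PD p (Φ ((j:ℕ)+1)) x t := by
      rw [h2]
    have h4 : ∑ p ∈ Finset.range (i:ℕ), Bco (Φ 1) Ψ₁ (i:ℕ) p x t * PD p (Φ ((j:ℕ)+1)) x t
        = ∑ p : Fin (m'+1), B i p * M t p j := by
      have hs1 : ∑ p : Fin (m'+1), B i p * M t p j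
          = ∑ p ∈ Finset.range (m'+1), Bco (Φ 1) Ψ₁ (i:ℕ) p x t * PD p (Φ ((j:ℕ)+1)) x t := by
        rw [Finset.sum_range fun p => Bco (Φ 1) Ψ₁ (i:ℕ) p x t * PD p (Φ ((j:ℕ)+1)) x t]
        exact Finset.sum_congr rfl fun p _ => rfl
      rw [hs1]
      apply Finset.sum_subset
      · exact Finset.range_subset_range.mpr (by have := i.isLt; omega)
      · intro p hp1 hp
        rw [Finset.mem_range] at hp
        have hz := Bco_eq_zero (P := Φ 1) (Q := Ψ₁) (i:ℕ) p (by omega)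
        rw [hz]
        simp
    show M' i j = s ((j:ℕ)+1) x t * M t i 0 + (∑ p, B i p * M t p j)
      - PD (i:ℕ) (Φ ((j:ℕ)+2)) x t
    rw [h1, hflowJ, PD_sub (hΦ1.fmulx (hss j)) (hΦs' j) (i:ℕ)]
    show PD (i:ℕ) (fmul (Φ 1) (s ((j:ℕ)+1))) x t - PD (i:ℕ) (Φ ((j:ℕ)+2)) x t = _
    rw [h3, h4]
    rfl
  -- compute each column determinant
  have hdiag : ∀ i : Fin (m'+1), B i i = 0 := by
    intro i
    show Bco (Φ 1) Ψ₁ (i:ℕ) (i:ℕ) x t = 0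
    rw [Bco_eq_zero (i:ℕ) (i:ℕ) le_rfl]
  have hdetj : ∀ j : Fin (m'+1), ((M t).updateCol j (fun i => M' i j)).det
      = (if j = 0 then s 1 x t * (M t).det else 0)
        + ((M t).updateCol j (fun i => ∑ p, B i p * M t p j)).det
        - (if j = Fin.last m' then WrShift Φ (m'+1) x t else 0) := by
    intro j
    have hsplit : ∀ u v w : Fin (m'+1) → ℝ,
        ((M t).updateCol j (u + v - w)).det
        = ((M t).updateCol j u).det + ((M t).updateCol j v).det
          - ((M t).updateCol j w).det := by
      intro u v w
      have h1 : u + v - w = (u + v) + (-1 : ℝ) • w := by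
        funext r
        simp only [Pi.add_apply, Pi.sub_apply, Pi.smul_apply, smul_eq_mul]
        ring
      rw [h1, Matrix.det_updateCol_add, Matrix.det_updateCol_add,
        Matrix.det_updateCol_smul]
      ring
    have hT1 : ((M t).updateCol j (fun i : Fin (m'+1) => s ((j:ℕ)+1) x t * M t i 0)).det
        = (if j = 0 then s 1 x t * (M t).det else 0) := by
      have hu : (fun i : Fin (m'+1) => s ((j:ℕ)+1) x t * M t i 0)
          = (s ((j:ℕ)+1) x t) • (fun i => M t i 0) := by
        funext r
        simp only [Pi.smul_apply, smul_eq_mul]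
      rw [hu, Matrix.det_updateCol_smul]
      rcases eq_or_ne j 0 with h | h
      · rw [if_pos h, h]
        rw [show ((M t).updateCol 0 fun i => M t i 0) = M t from
          Matrix.updateCol_eq_self (M t) 0]
        rfl
      · rw [if_neg h,
          Matrix.det_updateCol_eq_zero (show (0 : Fin (m'+1)) ≠ j from fun hh => h hh.symm),
          mul_zero]
    have hT3 : ((M t).updateCol j (fun i : Fin (m'+1) => PD (i:ℕ) (Φ ((j:ℕ)+2)) x t)).det
        = (if j = Fin.last m' then WrShift Φ (m'+1) x t else 0) := by
      rcases eq_or_ne j (Fin.last m') with h | h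
      · rw [if_pos h, h, WrShift, wronskian_eq_det]
        congr 1
        ext r p
        rcases eq_or_ne p (Fin.last m') with h2 | h2
        · rw [h2, Matrix.updateCol_self]
          show PD (r:ℕ) (Φ (((Fin.last m' : Fin (m'+1)):ℕ)+2)) x t
            = PD (r:ℕ) (Φ (if ((Fin.last m' : Fin (m'+1)):ℕ)+1 = m'+1 then (m'+1)+1
                else ((Fin.last m' : Fin (m'+1)):ℕ)+1))  x t
          simp [Fin.val_last]
        · rw [Matrix.updateCol_ne h2]
          show PD (r:ℕ) (Φ ((p:ℕ)+1)) x t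
            = PD (r:ℕ) (Φ (if ((p:ℕ))+1 = m'+1 then (m'+1)+1 else (p:ℕ)+1)) x t
          rw [if_neg (show ¬((p:ℕ)+1 = m'+1) from fun hh => h2 (Fin.ext (by
            simp only [Fin.val_last]; omega)))]
      · rw [if_neg h]
        have hjlt : (j:ℕ) < m' := by
          have h1 := j.isLt
          rcases Nat.lt_succ_iff_lt_or_eq.mp h1 with h2 | h2
          · exact h2
          · exact absurd (Fin.ext h2 : j = Fin.last m') h
        have hw : (fun i : Fin (m'+1) => PD (i:ℕ) (Φ ((j:ℕ)+2)) x t)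
            = fun i => M t i ⟨(j:ℕ)+1, by omega⟩ := by
          funext r
          rfl
        rw [hw]
        exact Matrix.det_updateCol_eq_zero (by
          intro hh
          have := congrArg Fin.val hh
          simp only [Fin.val_mk] at this
          omega)
    rw [hcol j, hsplit, hT1, hT3]
  rw [hval]
  calc ∑ j, ((M t).updateCol j (fun i => M' i j)).det
      = ∑ j : Fin (m'+1), ((if j = 0 then s 1 x t * (M t).det else 0)
          + ((M t).updateCol j (fun i => ∑ p, B i p * M t p j)).det
          - (if j = Fin.last m' then WrShift Φ (m'+1) x t else 0)) :=
        Finset.sum_congr rfl fun j _ => hdetj j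
    _ = (∑ j : Fin (m'+1), (if j = 0 then s 1 x t * (M t).det else 0))
          + (∑ j, ((M t).updateCol j (fun i => ∑ p, B i p * M t p j)).det)
          - (∑ j : Fin (m'+1), (if j = Fin.last m' then WrShift Φ (m'+1) x t else 0)) := by
        rw [Finset.sum_sub_distrib, Finset.sum_add_distrib]
    _ = s 1 x t * (M t).det + 0 - WrShift Φ (m'+1) x t := by
        rw [sum_det_updateColumn_mul_eq_zero (M t) B hdiag]
        rw [Finset.sum_ite_eq' Finset.univ (0 : Fin (m'+1)) (fun _ => s 1 x t * (M t).det)]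
        rw [Finset.sum_ite_eq' Finset.univ (Fin.last m') (fun _ => WrShift Φ (m'+1) x t)]
        simp
    _ = s 1 x t * Wr Φ (m'+1) x t - WrShift Φ (m'+1) x t := by
        rw [show (M t).det = Wr Φ (m'+1) x t from (by rw [Wr, wronskian_eq_det])]
        ring


/-- the eigenfunction Wronskians `W_m` satisfy the 2D-Toda-lattice-like
equation `W_m·∂∂̄W_m − (∂W_m)(∂̄W_m) = Φ₁Ψ₁·W_m² − W_{m+1}·W_{m−1}`. -/
theorem toda_like_eigenfunction_wronskians
    (k : ℕ) (Φ : ℕ → ℝ → ℝ → ℝ) (Ψ₁ : ℝ → ℝ → ℝ) (s : ℕ → ℝ → ℝ → ℝ)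
    (hΦ : ∀ j, 1 ≤ j → j ≤ k + 1 → Smooth2 (Φ j))
    (hΨ₁ : Smooth2 Ψ₁)
    (hs : ∀ j, 1 ≤ j → j ≤ k → Smooth2 (s j))
    (hpot : ∀ j, 1 ≤ j → j ≤ k → ∀ x t, pdx (s j) x t = Ψ₁ x t * Φ j x t)
    (hflow : ∀ j, 1 ≤ j → j ≤ k → ∀ x t,
      pdt (Φ j) x t = Φ 1 x t * s j x t - Φ (j + 1) x t) :
    ∀ m, 1 ≤ m → m ≤ k → ∀ x t,
      Wr Φ m x t * pdx (pdt (Wr Φ m)) x t - pdx (Wr Φ m) x t * pdt (Wr Φ m) x t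
        = Φ 1 x t * Ψ₁ x t * (Wr Φ m x t) ^ 2 - Wr Φ (m + 1) x t * Wr Φ (m - 1) x t := by
  intro m hm1 hmk x t
  obtain ⟨m', rfl⟩ : ∃ m', m = m' + 1 := ⟨m - 1, by omega⟩
  have hΦj : ∀ j : Fin (m'+1), Smooth2 (Φ ((j:ℕ)+1)) := by
    intro j
    exact hΦ _ (by omega) (by have := j.isLt; omega)
  have hΦsh : ∀ j : Fin (m'+1),
      Smooth2 (Φ (if (j:ℕ)+1 = m'+1 then (m'+1)+1 else (j:ℕ)+1)) := by
    intro j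
    have := j.isLt
    exact hΦ _ (by split_ifs <;> omega) (by split_ifs <;> omega)
  have hWsm : Smooth2 (Wr Φ (m'+1)) := smooth2_wronskian hΦj
  have hVsm : Smooth2 (WrShift Φ (m'+1)) := smooth2_wronskian hΦsh
  have hs1sm : Smooth2 (s 1) := hs 1 le_rfl (by omega)
  have hpdtW : ∀ a b : ℝ, pdt (Wr Φ (m'+1)) a b
      = s 1 a b * Wr Φ (m'+1) a b - WrShift Φ (m'+1) a b :=
    fun a b => pdt_Wr k Φ Ψ₁ s hΦ hΨ₁ hs hpot hflow m' hmk a b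
  have hpdtWfun : pdt (Wr Φ (m'+1))
      = fun a b => fmul (s 1) (Wr Φ (m'+1)) a b - WrShift Φ (m'+1) a b := by
    funext a b
    show pdt (Wr Φ (m'+1)) a b = s 1 a b * Wr Φ (m'+1) a b - WrShift Φ (m'+1) a b
    exact hpdtW a b
  have hDW : pdx (Wr Φ (m'+1)) x t
      = (Matrix.of fun i j : Fin (m'+1) =>
          PD (if (i : ℕ) = m' then m'+1 else (i : ℕ)) (Φ ((j : ℕ) + 1)) x t).det :=
    pdx_wronskian hΦj x t
  have hDV : pdx (WrShift Φ (m'+1)) x t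
      = (Matrix.of fun i j : Fin (m'+1) =>
          PD (if (i : ℕ) = m' then m'+1 else (i : ℕ))
            (Φ (if (j : ℕ) + 1 = m'+1 then (m'+1) + 1 else (j : ℕ) + 1)) x t).det :=
    pdx_wronskian hΦsh x t
  have hcomb : Wr Φ (m'+2) x t * Wr Φ m' x t
      = Wr Φ (m'+1) x t * pdx (WrShift Φ (m'+1)) x t
        - WrShift Φ (m'+1) x t * pdx (Wr Φ (m'+1)) x t := by
    rw [hDV, hDW]
    exact desnanot_wr Φ m' x t
  have hpdxpdt : pdx (pdt (Wr Φ (m'+1))) x t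
      = Ψ₁ x t * Φ 1 x t * Wr Φ (m'+1) x t + s 1 x t * pdx (Wr Φ (m'+1)) x t
        - pdx (WrShift Φ (m'+1)) x t := by
    rw [hpdtWfun]
    rw [pdx_sub (hs1sm.fmulx hWsm) hVsm x t]
    rw [pdx_mul hs1sm hWsm x t]
    rw [hpot 1 le_rfl (by omega) x t]
  have hm2 : Wr Φ (m'+1+1) x t = Wr Φ (m'+2) x t := rfl
  have hm0 : Wr Φ (m'+1-1) x t = Wr Φ m' x t := rfl
  rw [hpdxpdt, hpdtW x t, hm2, hm0]
  linear_combination hcomb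
end
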